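/- arXiv:1512.01445 — 12 statements merged into one kernel-verified Lean document; each statement's English description precedes it below -/
import Mathlib

section
/- Let s ≥ 1 and let z_0, z_1, …, z_s be complex numbers with z_j ≠ 2 for 1 ≤ j ≤ s. Given u ∈ ℂ, define v_* = u + (Σ_{j=0}^s z_j)·u, v_0 = v_* + (z_0/2)·(v_* − u), and for j = 1, …, s let v_j ∈ ℂ satisfy v_j = v_{j−1} + (z_j/2)·(v_j − u). Then v_s = r(z_0, z_1, …, z_s)·u, where r(z_0,…,z_s) = 1 + (1 + z_0/2)(Σ_{j=0}^s z_j)/∏_{j=1}^s (1 − z_j/2). -/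
/-- Applying the modified Douglas method (explicit correction first) to the scalar
test equation gives `v_s = r(z_0,…,z_s) · u` with the stability function
`r(z_0,…,z_s) = 1 + (1 + z_0/2)(Σ_{j=0}^s z_j)/∏_{j=1}^s (1 − z_j/2)`. -/
theorem modified_douglas_first_stability_function
    (s : ℕ) (hs : 1 ≤ s) (z : ℕ → ℂ)
    (hz : ∀ j, 1 ≤ j → j ≤ s → z j ≠ 2)
    (u vstar : ℂ) (v : ℕ → ℂ)
    (hvstar : vstar = u + (∑ j ∈ Finset.range (s + 1), z j) * u)
    (hv0 : v 0 = vstar + (z 0 / 2) * (vstar - u))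
    (hv : ∀ j, 1 ≤ j → j ≤ s → v j = v (j - 1) + (z j / 2) * (v j - u)) :
    v s = (1 + (1 + z 0 / 2) * (∑ j ∈ Finset.range (s + 1), z j) /
      ∏ j ∈ Finset.Icc 1 s, (1 - z j / 2)) * u := by
  set S := ∑ j ∈ Finset.range (s + 1), z j with hS
  have key : ∀ k, k ≤ s →
      (v k - u) * ∏ j ∈ Finset.Icc 1 k, (1 - z j / 2) = (1 + z 0 / 2) * S * u := by
    intro k
    induction k with
    | zero =>
      intro _
      simp only [Finset.Icc_self, Finset.Icc_eq_empty_of_lt (by norm_num : (1:ℕ) > 0)]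
      simp only [show Finset.Icc 1 0 = (∅ : Finset ℕ) by decide, Finset.prod_empty, mul_one]
      rw [hv0, hvstar]
      ring
    | succ k ih =>
      intro hk1
      have hk : k ≤ s := Nat.le_of_succ_le hk1
      have hrec := hv (k + 1) (Nat.succ_le_succ (Nat.zero_le k)) hk1
      simp only [Nat.add_sub_cancel] at hrec
      have step : (v (k + 1) - u) * (1 - z (k + 1) / 2) = v k - u := by
        linear_combination hrec
      rw [Finset.prod_Icc_succ_top (Nat.succ_le_succ (Nat.zero_le k)), ← mul_assoc,
        mul_right_comm, step, ih hk]
  have hprod : (∏ j ∈ Finset.Icc 1 s, (1 - z j / 2)) ≠ 0 := by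
    apply Finset.prod_ne_zero_iff.mpr
    intro j hj
    rw [Finset.mem_Icc] at hj
    intro h
    apply hz j hj.1 hj.2
    have : z j / 2 = 1 := by linear_combination -h
    field_simp at this
    simp [this]
  have hkey := key s le_rfl
  have hdiv : v s - u = (1 + z 0 / 2) * S * u / ∏ j ∈ Finset.Icc 1 s, (1 - z j / 2) :=
    (eq_div_iff hprod).mpr hkey
  linear_combination hdiv
end

section
/- Let s ≥ 1 and let z_0, z_1, …, z_s be complex numbers with z_j ≠ 2 for 1 ≤ j ≤ s. Given u ∈ ℂ, define v_0 = u + (Σ_{j=0}^s z_j)·u, for j = 1, …, s let v_j ∈ ℂ satisfy v_j = v_{j−1} + (z_j/2)·(v_j − u), and set u_new = v_s + (z_0/2)·(v_s − u). Then u_new = r(z_0, z_1, …, z_s)·u, where r(z_0,…,z_s) = 1 + (1 + z_0/2)(Σ_{j=0}^s z_j)/∏_{j=1}^s (1 − z_j/2). -/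
/-- Applying the modified Douglas method (explicit correction last) to the scalar
test equation gives `u_new = r(z_0,…,z_s) · u` with the stability function
`r(z_0,…,z_s) = 1 + (1 + z_0/2)(Σ_{j=0}^s z_j)/∏_{j=1}^s (1 − z_j/2)`. -/
theorem modified_douglas_last_stability_function
    (s : ℕ) (hs : 1 ≤ s) (z : ℕ → ℂ)
    (hz : ∀ j, 1 ≤ j → j ≤ s → z j ≠ 2)
    (u : ℂ) (v : ℕ → ℂ) (unew : ℂ)
    (hv0 : v 0 = u + (∑ j ∈ Finset.range (s + 1), z j) * u)
    (hv : ∀ j, 1 ≤ j → j ≤ s → v j = v (j - 1) + (z j / 2) * (v j - u))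
    (hunew : unew = v s + (z 0 / 2) * (v s - u)) :
    unew = (1 + (1 + z 0 / 2) * (∑ j ∈ Finset.range (s + 1), z j) /
      ∏ j ∈ Finset.Icc 1 s, (1 - z j / 2)) * u := by
  set S := ∑ j ∈ Finset.range (s + 1), z j with hS
  have key : ∀ j, j ≤ s → (v j - u) * ∏ i ∈ Finset.Icc 1 j, (1 - z i / 2) = S * u := by
    intro j
    induction j with
    | zero => intro _; simp [hv0]
    | succ k ih =>
      intro hk
      have hk' : k ≤ s := Nat.le_of_succ_le hk
      have h1 := hv (k + 1) (Nat.succ_le_succ (Nat.zero_le k)) hk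
      simp only [Nat.add_sub_cancel] at h1
      have h2 : (v (k + 1) - u) * (1 - z (k + 1) / 2) = v k - u := by
        linear_combination h1
      rw [Finset.prod_Icc_succ_top (Nat.succ_le_succ (Nat.zero_le k))]
      linear_combination (∏ i ∈ Finset.Icc 1 k, (1 - z i / 2)) * h2 + ih hk'
  have hne : ∀ i ∈ Finset.Icc 1 s, (1 - z i / 2) ≠ 0 := by
    intro i hi
    simp only [Finset.mem_Icc] at hi
    have := hz i hi.1 hi.2
    intro h
    exact this (by linear_combination -2 * h)
  have hPne : (∏ i ∈ Finset.Icc 1 s, (1 - z i / 2)) ≠ 0 := Finset.prod_ne_zero_iff.2 hne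
  have hvs : v s - u = S * u / ∏ i ∈ Finset.Icc 1 s, (1 - z i / 2) := by
    rw [eq_div_iff hPne]; exact key s le_rfl
  rw [hunew]
  have : v s = u + S * u / ∏ i ∈ Finset.Icc 1 s, (1 - z i / 2) := by
    linear_combination hvs
  rw [this]
  field_simp
  ring
end

section
/- Let z_0, z_1 ∈ ℂ with |1 + z_0| ≤ 1 and Re(z_1) ≤ 0. Then |r(z_0, z_1)| ≤ 1, where r(z_0, z_1) = 1 + (1 + z_0/2)(z_0 + z_1)/(1 − z_1/2). -/
/-- For `s = 1`: if `|1 + z_0| ≤ 1` and `Re z_1 ≤ 0`, then `|r(z_0, z_1)| ≤ 1`,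
where `r(z_0, z_1) = 1 + (1 + z_0/2)(z_0 + z_1)/(1 − z_1/2)`. -/
theorem stability_s_eq_one (z0 z1 : ℂ)
    (hz0 : ‖1 + z0‖ ≤ 1) (hz1 : z1.re ≤ 0) :
    ‖1 + (1 + z0 / 2) * (z0 + z1) / (1 - z1 / 2)‖ ≤ 1 := by
  have hre : 0 < (2 - z1).re := by
    simp only [Complex.sub_re, Complex.re_ofNat]
    linarith
  have hD : (2 - z1) ≠ 0 := fun h => by simp [h] at hre
  have hD2 : (1 - z1/2) ≠ 0 := by
    intro h
    apply hD
    have h2 : (2:ℂ) * (1 - z1/2) = 2 - z1 := by ring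
    rw [← h2, h, mul_zero]
  have key : 1 + (1 + z0 / 2) * (z0 + z1) / (1 - z1 / 2)
      = (2 - z1 + (2 + z0) * (z0 + z1)) / (2 - z1) := by
    field_simp
  rw [key, norm_div, div_le_one (by simpa using norm_pos_iff.mpr hD)]
  rw [Complex.norm_def, Complex.norm_def]
  apply Real.sqrt_le_sqrt
  have h0' : Complex.normSq (1 + z0) ≤ 1 := by
    rw [← Complex.sq_norm]
    nlinarith [Complex.norm_nonneg (1 + z0)]
  simp only [Complex.normSq_apply, Complex.add_re, Complex.add_im, Complex.sub_re,
    Complex.sub_im, Complex.mul_re, Complex.mul_im, Complex.re_ofNat, Complex.im_ofNat,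
    Complex.one_re, Complex.one_im] at h0' ⊢
  set x := z0.re; set y := z0.im; set c := z1.re; set d := z1.im
  have H1 : 0 ≤ 1 - (1+x)^2 - y^2 := by nlinarith [h0']
  have hp1 : 0 ≤ 1 + (1+x) := by nlinarith [h0', sq_nonneg y]
  have hReB : 0 ≤ 2 + (1+x)*(1+(1+x)^2+y^2) := by
    nlinarith [mul_nonneg hp1 (by positivity : (0:ℝ) ≤ 1+(1+x)^2), H1,
      mul_nonneg (sq_nonneg y) hp1]
  have hE : (1-(1+x)^2-y^2)*y^2 + (1 + 2*((1+x)^2 - y^2) + ((1+x)^2+y^2)^2) ≤ 4 := by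
    nlinarith [mul_nonneg H1 (by positivity : (0:ℝ) ≤ (1+x)^2+2+y^2), sq_nonneg y,
      mul_nonneg H1 (sq_nonneg y)]
  nlinarith [mul_nonneg H1 (sq_nonneg (d+y)), mul_nonneg H1 (sq_nonneg c),
    mul_nonneg (neg_nonneg.2 hz1) hReB, hE, H1]
end

section
/- Let s ≥ 2, let z_0 ∈ ℂ with |1 + z_0| ≤ 1, and let z_1, …, z_s be nonpositive real numbers. Then |r(z_0, z_1, …, z_s)| ≤ 1, where r(z_0,…,z_s) = 1 + (1 + z_0/2)(Σ_{j=0}^s z_j)/∏_{j=1}^s (1 − z_j/2). -/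
lemma one_add_sum_le_prod_aux (t : Finset ℕ) (f : ℕ → ℝ) (hf : ∀ j ∈ t, 0 ≤ f j) :
    1 + ∑ j ∈ t, f j ≤ ∏ j ∈ t, (1 + f j) := by
  induction t using Finset.cons_induction with
  | empty => simp
  | cons a t ha ih =>
    rw [Finset.sum_cons, Finset.prod_cons]
    have h1 : 0 ≤ f a := hf a (Finset.mem_cons_self a t)
    have h2 : 1 + ∑ j ∈ t, f j ≤ ∏ j ∈ t, (1 + f j) :=
      ih fun j hj => hf j (Finset.mem_cons_of_mem hj)
    have h3 : 0 ≤ ∑ j ∈ t, f j := Finset.sum_nonneg fun j hj => hf j (Finset.mem_cons_of_mem hj)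
    nlinarith

/-- For `s ≥ 2`: if `|1 + z_0| ≤ 1` and `z_1, …, z_s` are nonpositive reals, then
`|r(z_0, z_1, …, z_s)| ≤ 1`, where
`r(z_0,…,z_s) = 1 + (1 + z_0/2)(Σ_{j=0}^s z_j)/∏_{j=1}^s (1 − z_j/2)`. -/
theorem stability_s_ge_two (s : ℕ) (hs : 2 ≤ s)
    (z0 : ℂ) (hz0 : ‖1 + z0‖ ≤ 1)
    (z : ℕ → ℝ) (hz : ∀ j, 1 ≤ j → j ≤ s → z j ≤ 0) :
    ‖1 + (1 + z0 / 2) * (z0 + ∑ j ∈ Finset.Icc 1 s, (z j : ℂ)) /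
      ∏ j ∈ Finset.Icc 1 s, (1 - (z j : ℂ) / 2)‖ ≤ 1 := by
  set S : ℝ := ∑ j ∈ Finset.Icc 1 s, z j with hSdef
  set P : ℝ := ∏ j ∈ Finset.Icc 1 s, (1 - z j / 2) with hPdef
  have hzmem : ∀ j ∈ Finset.Icc 1 s, z j ≤ 0 := by
    intro j hj
    rw [Finset.mem_Icc] at hj
    exact hz j hj.1 hj.2
  have hS : S ≤ 0 := Finset.sum_nonpos hzmem
  have hP2 : 2 - S ≤ 2 * P := by
    have := one_add_sum_le_prod_aux (Finset.Icc 1 s) (fun j => -(z j) / 2)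
      (fun j hj => by have := hzmem j hj; linarith)
    have hsum : ∑ j ∈ Finset.Icc 1 s, -(z j) / 2 = -S / 2 := by
      rw [hSdef, ← Finset.sum_div, ← Finset.sum_neg_distrib]
    have hprod : ∏ j ∈ Finset.Icc 1 s, (1 + -(z j) / 2) = P := by
      rw [hPdef]; apply Finset.prod_congr rfl; intro j hj; ring
    rw [hsum, hprod] at this
    linarith
  have hP1 : 1 ≤ P := by linarith
  have hPpos : (0:ℝ) < P := by linarith
  have hPC : (∏ j ∈ Finset.Icc 1 s, (1 - (z j : ℂ) / 2)) = (P : ℂ) := by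
    rw [hPdef]; push_cast; rfl
  have hSC : (∑ j ∈ Finset.Icc 1 s, (z j : ℂ)) = (S : ℂ) := by
    rw [hSdef]; push_cast; rfl
  rw [hPC, hSC]
  set W : ℂ := 1 + z0 with hWdef
  have hPne : (P : ℂ) ≠ 0 := by exact_mod_cast hPpos.ne'
  have key : 1 + (1 + z0 / 2) * (z0 + (S:ℂ)) / (P:ℂ) =
      (((2*P - 1 + S : ℝ) : ℂ) + W^2 + (S:ℂ)*W) / (2*(P:ℂ)) := by
    rw [hWdef]; push_cast; field_simp; ring
  rw [key, norm_div]
  have habs2P : ‖2*(P:ℂ)‖ = 2*P := by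
    rw [show (2*(P:ℂ)) = ((2*P : ℝ) : ℂ) by push_cast; ring, Complex.norm_real, Real.norm_eq_abs,
      abs_of_pos (by linarith)]
  rw [habs2P]
  rw [div_le_one (by linarith)]
  have h1 : ‖((2*P - 1 + S : ℝ) : ℂ)‖ = 2*P - 1 + S := by
    rw [Complex.norm_real, Real.norm_eq_abs, abs_of_nonneg (by linarith)]
  have h2 : ‖W^2‖ ≤ 1 := by
    rw [norm_pow]
    calc ‖W‖ ^ 2 ≤ 1^2 := by
          apply pow_le_pow_left₀ (norm_nonneg W) hz0
        _ = 1 := one_pow 2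
  have h3 : ‖(S:ℂ)*W‖ ≤ -S := by
    rw [norm_mul, Complex.norm_real, Real.norm_eq_abs, abs_of_nonpos hS]
    calc -S * ‖W‖ ≤ -S * 1 := by
          apply mul_le_mul_of_nonneg_left hz0 (by linarith)
        _ = -S := mul_one _
  calc ‖((2*P - 1 + S : ℝ) : ℂ) + W^2 + (S:ℂ)*W‖
      ≤ ‖((2*P - 1 + S : ℝ) : ℂ) + W^2‖ + ‖(S:ℂ)*W‖ :=
        norm_add_le _ _
    _ ≤ ‖((2*P - 1 + S : ℝ) : ℂ)‖ + ‖W^2‖ + ‖(S:ℂ)*W‖ := by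
        have := norm_add_le (((2*P - 1 + S : ℝ) : ℂ)) (W^2); linarith
    _ ≤ (2*P - 1 + S) + 1 + (-S) := by rw [h1]; linarith
    _ ≤ 2*P := by linarith
end

section
/- Let q ≥ 0, let z_0 ∈ ℂ with |1 + z_0| ≤ 1, and let z_1, …, z_q be nonpositive real numbers. Then |r_*(z_0, z_1, …, z_q)| ≤ 1, where r_*(z_0, z_1, …, z_q) = 1 − 2(1 + z_0/2)/∏_{j=1}^{q}(1 − z_j/2). -/
/-- If `|1 + z_0| ≤ 1` and `z_1, …, z_q` are nonpositive reals, then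
`|r_*(z_0, z_1, …, z_q)| ≤ 1`, where
`r_*(z_0,…,z_q) = 1 − 2(1 + z_0/2)/∏_{j=1}^q (1 − z_j/2)`. -/
theorem limit_stability_function_bound (q : ℕ)
    (z0 : ℂ) (hz0 : ‖1 + z0‖ ≤ 1)
    (z : ℕ → ℝ) (hz : ∀ j, 1 ≤ j → j ≤ q → z j ≤ 0) :
    ‖1 - 2 * (1 + z0 / 2) /
      ∏ j ∈ Finset.Icc 1 q, (1 - (z j : ℂ) / 2)‖ ≤ 1 := by
  set P : ℝ := ∏ j ∈ Finset.Icc 1 q, (1 - z j / 2) with hPdef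
  have hP1 : 1 ≤ P := by
    rw [hPdef]
    calc (1:ℝ) = ∏ _j ∈ Finset.Icc 1 q, (1:ℝ) := (Finset.prod_const_one).symm
      _ ≤ ∏ j ∈ Finset.Icc 1 q, (1 - z j / 2) := by
          apply Finset.prod_le_prod (fun j _ => zero_le_one)
          intro j hj
          obtain ⟨h1, h2⟩ := Finset.mem_Icc.mp hj
          have := hz j h1 h2; linarith
  have hP0 : (0:ℝ) < P := lt_of_lt_of_le one_pos hP1
  have hPne : (P:ℂ) ≠ 0 := by exact_mod_cast hP0.ne'
  have hcast : ∏ j ∈ Finset.Icc 1 q, (1 - (z j : ℂ) / 2) = (P:ℂ) := by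
    rw [hPdef]; push_cast; rfl
  rw [hcast]
  have key : 1 - 2 * (1 + z0 / 2) / (P:ℂ)
      = ((1 - 1/P : ℝ) : ℂ) - ((1/P : ℝ) : ℂ) * (1 + z0) := by
    push_cast
    field_simp
    ring
  rw [key]
  calc ‖((1 - 1/P : ℝ) : ℂ) - ((1/P : ℝ) : ℂ) * (1 + z0)‖
      ≤ ‖((1 - 1/P : ℝ) : ℂ)‖ + ‖((1/P : ℝ) : ℂ) * (1 + z0)‖ := by
        exact norm_sub_le ((1 - 1/P : ℝ) : ℂ) (((1/P : ℝ) : ℂ) * (1 + z0))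
    _ = |1 - 1/P| + |1/P| * ‖1 + z0‖ := by
        rw [norm_mul, Complex.norm_real, Complex.norm_real, Real.norm_eq_abs, Real.norm_eq_abs]
    _ ≤ (1 - 1/P) + (1/P) * 1 := by
        have h1 : (0:ℝ) ≤ 1 - 1/P := by
          have : 1/P ≤ 1 := by rw [div_le_one hP0]; exact hP1
          linarith
        have h2 : (0:ℝ) ≤ 1/P := by positivity
        rw [abs_of_nonneg h1, abs_of_nonneg h2]
        gcongr
    _ = 1 := by field_simp; ring
end

section
/- Let s ≥ 2 and let z_0, z_1, …, z_{s−1} ∈ ℂ with z_j ≠ 2 for 1 ≤ j ≤ s − 1, and let z_s be a nonpositive real number. Then, with θ_s = (1 − z_s/2)^{-1}, one has the identity r(z_0, …, z_{s−1}, z_s) = θ_s · r(z_0, …, z_{s−1}) + (1 − θ_s) · r_*(z_0, …, z_{s−1}), θ_s ∈ (0, 1], and consequently |r(z_0, …, z_{s−1}, z_s)| ≤ max(|r(z_0, …, z_{s−1})|, |r_*(z_0, …, z_{s−1})|). -/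
/-- The convexity identity `r(z_0,…,z_{s−1},z_s) = θ_s r(z_0,…,z_{s−1})
+ (1−θ_s) r_*(z_0,…,z_{s−1})` with `θ_s = (1 − z_s/2)⁻¹ ∈ (0,1]` for `z_s ≤ 0`,
and the resulting bound by the maximum of the two moduli. -/
theorem convexity_identity_and_max_bound (s : ℕ) (hs : 2 ≤ s) (z : ℕ → ℂ)
    (hz : ∀ j, 1 ≤ j → j ≤ s - 1 → z j ≠ 2)
    (zs : ℝ) (hzs : zs ≤ 0) :
    (1 + (1 + z 0 / 2) * ((∑ j ∈ Finset.range s, z j) + (zs : ℂ)) /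
        ((∏ j ∈ Finset.Icc 1 (s - 1), (1 - z j / 2)) * (1 - (zs : ℂ) / 2)) =
      (((1 - zs / 2)⁻¹ : ℝ) : ℂ) *
        (1 + (1 + z 0 / 2) * (∑ j ∈ Finset.range s, z j) /
          ∏ j ∈ Finset.Icc 1 (s - 1), (1 - z j / 2)) +
      (1 - (((1 - zs / 2)⁻¹ : ℝ) : ℂ)) *
        (1 - 2 * (1 + z 0 / 2) / ∏ j ∈ Finset.Icc 1 (s - 1), (1 - z j / 2))) ∧
    (1 - zs / 2)⁻¹ ∈ Set.Ioc (0 : ℝ) 1 ∧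
    norm (1 + (1 + z 0 / 2) * ((∑ j ∈ Finset.range s, z j) + (zs : ℂ)) /
        ((∏ j ∈ Finset.Icc 1 (s - 1), (1 - z j / 2)) * (1 - (zs : ℂ) / 2))) ≤
      max (norm (1 + (1 + z 0 / 2) * (∑ j ∈ Finset.range s, z j) /
            ∏ j ∈ Finset.Icc 1 (s - 1), (1 - z j / 2)))
          (norm (1 - 2 * (1 + z 0 / 2) /
            ∏ j ∈ Finset.Icc 1 (s - 1), (1 - z j / 2))) := by
  have hP : (∏ j ∈ Finset.Icc 1 (s - 1), (1 - z j / 2)) ≠ 0 := by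
    apply Finset.prod_ne_zero_iff.2
    intro j hj
    simp only [Finset.mem_Icc] at hj
    have := hz j hj.1 hj.2
    intro h
    apply this
    have : z j / 2 = 1 := by linear_combination -h
    field_simp at this
    exact this
  have hzr : (0:ℝ) < 1 - zs / 2 := by linarith
  have hθ : (1 - zs / 2)⁻¹ ∈ Set.Ioc (0 : ℝ) 1 := by
    constructor
    · positivity
    · rw [inv_le_one_iff₀]; right; linarith
  have hzc : (1 - (zs : ℂ) / 2) ≠ 0 := by
    intro h
    have : ((1 - zs/2 : ℝ) : ℂ) = 0 := by push_cast; linear_combination h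
    exact absurd (Complex.ofReal_eq_zero.1 this) (ne_of_gt hzr)
  have hid : (1 + (1 + z 0 / 2) * ((∑ j ∈ Finset.range s, z j) + (zs : ℂ)) /
        ((∏ j ∈ Finset.Icc 1 (s - 1), (1 - z j / 2)) * (1 - (zs : ℂ) / 2)) =
      (((1 - zs / 2)⁻¹ : ℝ) : ℂ) *
        (1 + (1 + z 0 / 2) * (∑ j ∈ Finset.range s, z j) /
          ∏ j ∈ Finset.Icc 1 (s - 1), (1 - z j / 2)) +
      (1 - (((1 - zs / 2)⁻¹ : ℝ) : ℂ)) *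
        (1 - 2 * (1 + z 0 / 2) / ∏ j ∈ Finset.Icc 1 (s - 1), (1 - z j / 2))) := by
    have key : ∀ P : ℂ, P ≠ 0 →
        1 + (1 + z 0 / 2) * ((∑ j ∈ Finset.range s, z j) + (zs : ℂ)) /
          (P * (1 - (zs : ℂ) / 2)) =
        (((1 - zs / 2)⁻¹ : ℝ) : ℂ) *
          (1 + (1 + z 0 / 2) * (∑ j ∈ Finset.range s, z j) / P) +
        (1 - (((1 - zs / 2)⁻¹ : ℝ) : ℂ)) * (1 - 2 * (1 + z 0 / 2) / P) := by
      intro P hP0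
      push_cast
      rw [div_mul_eq_div_div]
      linear_combination (-2 * (1 + z 0 / 2) * P⁻¹) * mul_inv_cancel₀ hzc
    exact key _ hP
  refine ⟨hid, hθ, ?_⟩
  rw [hid]
  set θ : ℝ := (1 - zs / 2)⁻¹ with hθdef
  set A := (1 + (1 + z 0 / 2) * (∑ j ∈ Finset.range s, z j) /
          ∏ j ∈ Finset.Icc 1 (s - 1), (1 - z j / 2)) with hA
  set B := (1 - 2 * (1 + z 0 / 2) / ∏ j ∈ Finset.Icc 1 (s - 1), (1 - z j / 2)) with hB
  have hθ0 : 0 ≤ θ := le_of_lt hθ.1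
  have hθ1 : θ ≤ 1 := hθ.2
  calc norm ((θ:ℂ) * A + (1 - (θ:ℂ)) * B)
      ≤ norm ((θ:ℂ) * A) + norm ((1 - (θ:ℂ)) * B) := norm_add_le _ _
    _ = θ * norm A + (1 - θ) * norm B := by
        rw [norm_mul, norm_mul]
        have : ((1:ℂ) - (θ:ℂ)) = ((1 - θ : ℝ) : ℂ) := by push_cast; ring
        rw [this, Complex.norm_real, Complex.norm_real,
          Real.norm_of_nonneg hθ0, Real.norm_of_nonneg (by linarith)]
    _ ≤ θ * max (norm A) (norm B)
        + (1 - θ) * max (norm A) (norm B) := by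
        exact add_le_add
          (mul_le_mul_of_nonneg_left (le_max_left _ _) hθ0)
          (mul_le_mul_of_nonneg_left (le_max_right _ _) (by linarith))
    _ = max (norm A) (norm B) := by ring
end

section
/- Let z_0 ∈ ℂ and suppose that |r(z_0, z_1)| ≤ 1 for every nonpositive real number z_1, where r(z_0, z_1) = 1 + (1 + z_0/2)(z_0 + z_1)/(1 − z_1/2). Then |1 + z_0| ≤ 1. -/
/-- If `|r(z_0, z_1)| ≤ 1` for every nonpositive real `z_1`, where
`r(z_0, z_1) = 1 + (1 + z_0/2)(z_0 + z_1)/(1 − z_1/2)`, then `|1 + z_0| ≤ 1`. -/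
theorem necessity_of_z0_condition (z0 : ℂ)
    (h : ∀ z1 : ℝ, z1 ≤ 0 →
      ‖1 + (1 + z0 / 2) * (z0 + (z1 : ℂ)) / (1 - (z1 : ℂ) / 2)‖ ≤ 1) :
    ‖1 + z0‖ ≤ 1 := by
  have h1 : Filter.Tendsto (fun t : ℝ => t⁻¹) Filter.atBot (nhds 0) := by
    have := (tendsto_inv_atTop_zero.comp Filter.tendsto_neg_atBot_atTop (β := ℝ)).neg
    simpa [Function.comp, inv_neg] using this
  have h2 : Filter.Tendsto (fun t : ℝ => ((t : ℂ))⁻¹) Filter.atBot (nhds 0) := by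
    have := (Complex.continuous_ofReal.tendsto 0).comp h1
    refine this.congr fun t => ?_
    simp [Function.comp, Complex.ofReal_inv]
  have h3 : Filter.Tendsto
      (fun t : ℝ => 1 + (1 + z0 / 2) * ((z0 * (t : ℂ)⁻¹ + 1) / ((t : ℂ)⁻¹ - 1 / 2)))
      Filter.atBot (nhds (1 + (1 + z0 / 2) * ((z0 * 0 + 1) / (0 - 1 / 2)))) := by
    apply Filter.Tendsto.const_add
    apply Filter.Tendsto.const_mul
    apply Filter.Tendsto.div
    · exact ((h2.const_mul z0).add_const 1)
    · exact h2.sub_const (1 / 2)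
    · norm_num
  have e : (1 + (1 + z0 / 2) * ((z0 * 0 + 1) / (0 - 1 / 2))) = -(1 + z0) := by ring
  rw [e] at h3
  have h4 : Filter.Tendsto
      (fun t : ℝ => 1 + (1 + z0 / 2) * (z0 + (t : ℂ)) / (1 - (t : ℂ) / 2))
      Filter.atBot (nhds (-(1 + z0))) := by
    apply h3.congr'
    filter_upwards [Filter.eventually_lt_atBot (0 : ℝ)] with t ht
    have ht0 : (t : ℂ) ≠ 0 := by exact_mod_cast ne_of_lt ht
    have hdR : (1 : ℝ) - t / 2 ≠ 0 := by nlinarith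
    have hd : (1 : ℂ) - (t : ℂ) / 2 ≠ 0 := by exact_mod_cast hdR
    have hiR : t⁻¹ - 1 / 2 ≠ 0 := by
      have : t⁻¹ < 0 := inv_lt_zero.2 ht
      nlinarith
    have hi : (t : ℂ)⁻¹ - 1 / 2 ≠ 0 := by
      have : ((t⁻¹ - 1 / 2 : ℝ) : ℂ) ≠ 0 := by exact_mod_cast hiR
      push_cast at this
      exact this
    have key : (z0 * (t : ℂ)⁻¹ + 1) / ((t : ℂ)⁻¹ - 1 / 2) = (z0 + t) / (1 - (t : ℂ) / 2) := by
      rw [div_eq_div_iff hi hd]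
      field_simp
    rw [key, mul_div_assoc]
  have habs : Filter.Tendsto
      (fun t : ℝ => ‖1 + (1 + z0 / 2) * (z0 + (t : ℂ)) / (1 - (t : ℂ) / 2)‖)
      Filter.atBot (nhds ‖-(1 + z0)‖) :=
    (continuous_norm.tendsto _).comp h4
  rw [norm_neg] at habs
  exact le_of_tendsto habs (Filter.eventually_atBot.mpr ⟨0, fun t ht => h t ht⟩)
end

section
/- For every α with 0 < α ≤ π/2 there exist z_0, z_1, z_2 ∈ ℂ such that |1 + z_0| ≤ 1, z_1 lies in the wedge W_α, z_2 is a nonpositive real number, and |r(z_0, z_1, z_2)| > 1, where r(z_0, z_1, z_2) = 1 + (1 + z_0/2)(z_0 + z_1 + z_2)/((1 − z_1/2)(1 − z_2/2)). -/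
/-- Sharpness for `s = 2`: for every angle `0 < α ≤ π/2` there exist `z_0` with
`|1 + z_0| ≤ 1`, `z_1` in the wedge `W_α = {ζ : ζ = 0 ∨ |arg(−ζ)| ≤ α}` and a
nonpositive real `z_2` such that `|r(z_0, z_1, z_2)| > 1`. -/
theorem sharpness_s_eq_two (α : ℝ) (hα0 : 0 < α) (hα : α ≤ Real.pi / 2) :
    ∃ (z0 z1 : ℂ) (z2 : ℝ), ‖1 + z0‖ ≤ 1 ∧
      (z1 = 0 ∨ |Complex.arg (-z1)| ≤ α) ∧ z2 ≤ 0 ∧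
      1 < ‖1 + (1 + z0 / 2) * (z0 + z1 + (z2 : ℂ)) /
        ((1 - z1 / 2) * (1 - (z2 : ℂ) / 2))‖ := by
  have hpi := Real.pi_pos
  set c := Real.cos α with hc
  set s := Real.sin α with hs
  have hs0 : 0 < s := Real.sin_pos_of_pos_of_lt_pi hα0 (by linarith)
  have hc0 : 0 ≤ c := Real.cos_nonneg_of_mem_Icc ⟨by linarith, hα⟩
  have hsc : s ^ 2 = 1 - c ^ 2 := by
    have := Real.sin_sq_add_cos_sq α
    linarith
  have hc1 : c < 1 := by nlinarith
  refine ⟨((-1 - c : ℝ) : ℂ) + (s : ℝ) * Complex.I,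
    ((-2 * c : ℝ) : ℂ) + ((2 * s : ℝ) : ℂ) * Complex.I, -6, ?_, ?_, by norm_num, ?_⟩
  · -- |1 + z0| = 1
    have h1 : (1 : ℂ) + (((-1 - c : ℝ) : ℂ) + (s : ℝ) * Complex.I)
        = ((-c : ℝ) : ℂ) + (s : ℝ) * Complex.I := by
      push_cast; ring
    rw [h1, Complex.norm_add_mul_I]
    have : (-c) ^ 2 + s ^ 2 = 1 := by nlinarith
    rw [this, Real.sqrt_one]
  · -- arg condition
    right
    have h2 : -(((-2 * c : ℝ) : ℂ) + ((2 * s : ℝ) : ℂ) * Complex.I)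
        = (2 : ℝ) * (Complex.cos ((-α : ℝ) : ℂ) + Complex.sin ((-α : ℝ) : ℂ) * Complex.I) := by
      rw [← Complex.ofReal_cos, ← Complex.ofReal_sin, Real.cos_neg, Real.sin_neg, ← hc, ← hs]
      push_cast; ring
    rw [h2, Complex.arg_real_mul _ (by norm_num : (0:ℝ) < 2),
      Complex.arg_cos_add_sin_mul_I ⟨by linarith, by linarith⟩]
    rw [abs_neg, abs_of_pos hα0]
  · -- the main inequality
    clear hc hs
    clear_value c s
    clear hα hα0 hpi
    have hscC : (s : ℂ) ^ 2 = 1 - (c : ℂ) ^ 2 := by exact_mod_cast congrArg (Complex.ofReal) hsc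
    have hI : Complex.I ^ 2 = -1 := Complex.I_sq
    set z0 : ℂ := ((-1 - c : ℝ) : ℂ) + (s : ℝ) * Complex.I with hz0
    set z1 : ℂ := ((-2 * c : ℝ) : ℂ) + ((2 * s : ℝ) : ℂ) * Complex.I with hz1
    have eD : (1 - z1 / 2) * (1 - ((-6 : ℝ) : ℂ) / 2)
        = ((4 * (1 + c) : ℝ) : ℂ) + ((-(4 * s) : ℝ) : ℂ) * Complex.I := by
      rw [hz1]; push_cast; ring
    have eN : (1 + z0 / 2) * (z0 + z1 + ((-6 : ℝ) : ℂ))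
        = ((3 * c ^ 2 + 2 * c - 5 : ℝ) : ℂ) + ((-(s * (2 + 3 * c)) : ℝ) : ℂ) * Complex.I := by
      rw [hz0, hz1]
      push_cast
      linear_combination (3 * (s : ℂ) ^ 2 / 2) * hI - (3 / 2 : ℂ) * hscC
    have hDne : ((4 * (1 + c) : ℝ) : ℂ) + ((-(4 * s) : ℝ) : ℂ) * Complex.I ≠ 0 := by
      intro h
      have := congrArg Complex.im h
      simp [Complex.add_im, Complex.mul_im] at this
      linarith
    have eSum : ((4 * (1 + c) : ℝ) : ℂ) + ((-(4 * s) : ℝ) : ℂ) * Complex.I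
          + (((3 * c ^ 2 + 2 * c - 5 : ℝ) : ℂ) + ((-(s * (2 + 3 * c)) : ℝ) : ℂ) * Complex.I)
        = ((3 * c ^ 2 + 6 * c - 1 : ℝ) : ℂ) + ((-(3 * s * (2 + c)) : ℝ) : ℂ) * Complex.I := by
      push_cast; ring
    have key : 1 + (1 + z0 / 2) * (z0 + z1 + ((-6 : ℝ) : ℂ)) /
        ((1 - z1 / 2) * (1 - ((-6 : ℝ) : ℂ) / 2))
        = (((3 * c ^ 2 + 6 * c - 1 : ℝ) : ℂ) + ((-(3 * s * (2 + c)) : ℝ) : ℂ) * Complex.I) /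
          (((4 * (1 + c) : ℝ) : ℂ) + ((-(4 * s) : ℝ) : ℂ) * Complex.I) := by
      rw [eN, eD, add_div' _ _ _ hDne, one_mul, eSum]
    rw [key, norm_div, Complex.norm_add_mul_I, Complex.norm_add_mul_I]
    have hden : (0 : ℝ) < Real.sqrt ((4 * (1 + c)) ^ 2 + (-(4 * s)) ^ 2) := by
      apply Real.sqrt_pos.mpr
      positivity
    rw [lt_div_iff₀ hden, one_mul]
    apply Real.sqrt_lt_sqrt (by positivity)
    nlinarith [mul_pos (sub_pos.mpr hc1) (by nlinarith : (0:ℝ) < 5 - 3 * c)]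
end

section
/- Let ν > 0 and μ > 0. For φ ∈ ℝ set z_0(φ) = i·ν·sin(2φ) and z_1(φ) = −(4ν/μ)·sin²(φ). Then |r_*(z_0(φ), z_1(φ))| ≤ 1 for all φ ∈ ℝ if and only if ν ≤ 2/μ, where r_*(z_0, z_1) = 1 − 2(1 + z_0/2)/(1 − z_1/2). -/
lemma aux_abs (b c : ℝ) (hc : 0 < c) :
    ‖(1 - 2 * (1 + Complex.I * (b : ℂ) / 2) / (c : ℂ))‖ ≤ 1 ↔
      (c - 2) ^ 2 + b ^ 2 ≤ c ^ 2 := by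
  have hc0 : (c : ℂ) ≠ 0 := by exact_mod_cast hc.ne'
  have h1 : (1 - 2 * (1 + Complex.I * (b : ℂ) / 2) / (c : ℂ)) =
      (((c - 2 : ℝ) : ℂ) - (b : ℝ) * Complex.I) / (c : ℂ) := by
    field_simp
    push_cast; ring
  rw [h1, norm_div, Complex.norm_real, Real.norm_eq_abs, abs_of_pos hc, div_le_one hc]
  have hs : ‖(((c - 2 : ℝ) : ℂ) - (b : ℝ) * Complex.I)‖
      = Real.sqrt ((c - 2) ^ 2 + b ^ 2) := by
    rw [Complex.norm_def, Complex.normSq_apply]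
    simp
    ring_nf
  rw [hs, show c = Real.sqrt (c ^ 2) by rw [Real.sqrt_sq hc.le],
    Real.sqrt_le_sqrt_iff (by positivity)]
  rw [Real.sqrt_sq hc.le]

/-- Von Neumann analysis for central discretization of `u_t + a u_x = d u_xx + c u`:
with `z_0(φ) = i ν sin(2φ)` and `z_1(φ) = −(4ν/μ) sin²(φ)`, one has
`|r_*(z_0(φ), z_1(φ))| ≤ 1` for all `φ` iff `ν ≤ 2/μ`, where
`r_*(z_0, z_1) = 1 − 2(1 + z_0/2)/(1 − z_1/2)`. -/
theorem central_advection_rstar_stability (ν μ : ℝ) (hν : 0 < ν) (hμ : 0 < μ) :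
    (∀ φ : ℝ, ‖(1 - 2 * (1 + Complex.I * (ν * Real.sin (2 * φ)) / 2) /
        (1 - ((-(4 * ν / μ) * Real.sin φ ^ 2 : ℝ) : ℂ) / 2) : ℂ)‖ ≤ 1) ↔ ν ≤ 2 / μ := by
  have hrw : ∀ φ : ℝ,
      (1 - ((-(4 * ν / μ) * Real.sin φ ^ 2 : ℝ) : ℂ) / 2)
        = ((1 + 2 * ν / μ * Real.sin φ ^ 2 : ℝ) : ℂ) := by
    intro φ; push_cast; ring
  have hcpos : ∀ φ : ℝ, 0 < 1 + 2 * ν / μ * Real.sin φ ^ 2 := by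
    intro φ; positivity
  have hiff : ∀ φ : ℝ,
      ‖(1 - 2 * (1 + Complex.I * (ν * Real.sin (2 * φ)) / 2) /
        (1 - ((-(4 * ν / μ) * Real.sin φ ^ 2 : ℝ) : ℂ) / 2) : ℂ)‖ ≤ 1 ↔
      (1 + 2 * ν / μ * Real.sin φ ^ 2 - 2) ^ 2 + (ν * Real.sin (2 * φ)) ^ 2
        ≤ (1 + 2 * ν / μ * Real.sin φ ^ 2) ^ 2 := by
    intro φ
    rw [hrw φ, show (Complex.I * (ν * Real.sin (2 * φ)) / 2 : ℂ)
        = Complex.I * ((ν * Real.sin (2 * φ) : ℝ) : ℂ) / 2 by norm_cast]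
    exact aux_abs (ν * Real.sin (2 * φ)) _ (hcpos φ)
  constructor
  · intro h
    have key : ∀ n : ℕ, ν * Real.cos (1 / (n + 1 : ℝ)) ^ 2 ≤ 2 / μ := by
      intro n
      set φ : ℝ := 1 / (n + 1 : ℝ) with hφdef
      have hφpos : 0 < φ := by positivity
      have hφlt : φ < Real.pi := by
        have h1 : φ ≤ 1 := by
          rw [hφdef, div_le_one (by positivity)]
          linarith [Nat.cast_nonneg (α := ℝ) n]
        linarith [Real.pi_gt_three]
      have hsin : 0 < Real.sin φ := Real.sin_pos_of_pos_of_lt_pi hφpos hφlt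
      have hc := (hiff φ).mp (h φ)
      rw [Real.sin_two_mul] at hc
      have hb : (ν * (2 * Real.sin φ * Real.cos φ)) ^ 2
          ≤ 4 * (2 * ν / μ * Real.sin φ ^ 2) := by nlinarith [hc]
      have hx : 2 * ν / μ * Real.sin φ ^ 2 * μ = 2 * ν * Real.sin φ ^ 2 := by
        field_simp
      have hb2 : (ν * (2 * Real.sin φ * Real.cos φ)) ^ 2 * μ
          ≤ 8 * ν * Real.sin φ ^ 2 := by
        have := mul_le_mul_of_nonneg_right hb hμ.le
        nlinarith [this, hx]
      have hμ' : ν * μ * Real.cos φ ^ 2 ≤ 2 := by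
        nlinarith [hb2, mul_pos hν (pow_pos hsin 2), pow_pos hsin 2]
      rw [le_div_iff₀ hμ]
      nlinarith [hμ']
    have htend : Filter.Tendsto (fun n : ℕ => ν * Real.cos (1 / (n + 1 : ℝ)) ^ 2)
        Filter.atTop (nhds ν) := by
      have h0 : Filter.Tendsto (fun n : ℕ => 1 / (n + 1 : ℝ)) Filter.atTop (nhds 0) :=
        tendsto_one_div_add_atTop_nhds_zero_nat
      have hcont : Continuous (fun x : ℝ => ν * Real.cos x ^ 2) := by continuity
      have := (hcont.tendsto 0).comp h0
      simpa [Function.comp_def] using this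
    exact le_of_tendsto' htend key
  · intro h φ
    rw [hiff φ, Real.sin_two_mul]
    have hνμ : ν * μ ≤ 2 := by
      rw [le_div_iff₀ hμ] at h; linarith
    have hb : (ν * (2 * Real.sin φ * Real.cos φ)) ^ 2
        ≤ 4 * (2 * ν / μ * Real.sin φ ^ 2) := by
      rw [show 4 * (2 * ν / μ * Real.sin φ ^ 2) = 8 * ν * Real.sin φ ^ 2 / μ by
        field_simp; ring, le_div_iff₀ hμ]
      nlinarith [hνμ, Real.cos_sq_le_one φ,
        mul_nonneg (mul_nonneg hν.le (sq_nonneg (Real.sin φ))) (sq_nonneg (Real.cos φ)),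
        mul_nonneg hν.le (sq_nonneg (Real.sin φ))]
    nlinarith [hb]
end

section
/- Let s ≥ 1 and let Z_0, Z_1, …, Z_s be m×m real matrices. Set P_0 = I + (1/2)Z_0, Q_j = I − (1/2)Z_j for j = 1, …, s, assume each Q_j is invertible, and set Z = Z_0 + Z_1 + ⋯ + Z_s. Suppose vectors e_old, σ_0, ρ_0, ρ_1, …, ρ_s, w_*, w_0, w_1, …, w_s, e_new in ℝ^m satisfy: w_* = Z·e_old + σ_0; w_0 = P_0·w_* + ρ_0; w_j = Q_j^{-1}(w_{j−1} + ρ_j) for j = 1, …, s; and e_new = e_old + w_s. Then e_new = R·e_old + d, where R = I + Q_s^{-1}···Q_2^{-1}Q_1^{-1}P_0·Z and d = Q_s^{-1}···Q_2^{-1}Q_1^{-1}(P_0·σ_0 + ρ_0) + Σ_{j=1}^s Q_s^{-1}···Q_j^{-1}·ρ_j. -/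
open Matrix

/-- `QInvProd Q j s = Q_s⁻¹ ⋯ Q_{j+1}⁻¹ Q_j⁻¹` (with `Q_j⁻¹` innermost, i.e. applied
first, and `Q_s⁻¹` outermost). -/
noncomputable def QInvProd {m : ℕ} (Q : ℕ → Matrix (Fin m) (Fin m) ℝ) (j s : ℕ) :
    Matrix (Fin m) (Fin m) ℝ :=
  ((List.range' j (s + 1 - j)).reverse.map fun i => (Q i)⁻¹).prod

lemma QInvProd_self {m : ℕ} (Q : ℕ → Matrix (Fin m) (Fin m) ℝ) (j : ℕ) :
    QInvProd Q j j = (Q j)⁻¹ := by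
  simp [QInvProd, List.range'_one]

lemma QInvProd_succ {m : ℕ} (Q : ℕ → Matrix (Fin m) (Fin m) ℝ) (j k : ℕ)
    (h : j ≤ k + 1) : QInvProd Q j (k + 1) = (Q (k + 1))⁻¹ * QInvProd Q j k := by
  have h1 : k + 1 + 1 - j = (k + 1 - j) + 1 := by omega
  have h2 : j + (k + 1 - j) = k + 1 := by omega
  simp [QInvProd, h1, List.range'_concat, h2]

/-- Error recursion for the modified Douglas method with the explicit correction
performed first: `e_new = R e_old + d` with
`R = I + Q_s⁻¹⋯Q_1⁻¹ P_0 Z` and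
`d = Q_s⁻¹⋯Q_1⁻¹ (P_0 σ_0 + ρ_0) + Σ_{j=1}^s Q_s⁻¹⋯Q_j⁻¹ ρ_j`. -/
theorem error_recursion_explicit_first (m s : ℕ) (hs : 1 ≤ s)
    (Z : ℕ → Matrix (Fin m) (Fin m) ℝ)
    (P0 : Matrix (Fin m) (Fin m) ℝ) (Q : ℕ → Matrix (Fin m) (Fin m) ℝ)
    (hP0 : P0 = 1 + (1 / 2 : ℝ) • Z 0)
    (hQ : ∀ j, 1 ≤ j → j ≤ s → Q j = 1 - (1 / 2 : ℝ) • Z j)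
    (hQinv : ∀ j, 1 ≤ j → j ≤ s → IsUnit (Q j))
    (Ztot : Matrix (Fin m) (Fin m) ℝ)
    (hZtot : Ztot = ∑ j ∈ Finset.range (s + 1), Z j)
    (eold σ0 : Fin m → ℝ) (ρ : ℕ → Fin m → ℝ)
    (wstar : Fin m → ℝ) (w : ℕ → Fin m → ℝ) (enew : Fin m → ℝ)
    (hwstar : wstar = Ztot *ᵥ eold + σ0)
    (hw0 : w 0 = P0 *ᵥ wstar + ρ 0)
    (hw : ∀ j, 1 ≤ j → j ≤ s → w j = (Q j)⁻¹ *ᵥ (w (j - 1) + ρ j))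
    (henew : enew = eold + w s) :
    enew = (1 + QInvProd Q 1 s * P0 * Ztot) *ᵥ eold +
      (QInvProd Q 1 s *ᵥ (P0 *ᵥ σ0 + ρ 0) +
        ∑ j ∈ Finset.Icc 1 s, QInvProd Q j s *ᵥ ρ j) := by
  have key : ∀ k, 1 ≤ k → k ≤ s →
      w k = QInvProd Q 1 k *ᵥ w 0 + ∑ j ∈ Finset.Icc 1 k, QInvProd Q j k *ᵥ ρ j := by
    intro k
    induction k with
    | zero => intro h; omega
    | succ k ih =>
      intro _ hks
      rcases Nat.eq_zero_or_pos k with hk0 | hk1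
      · subst hk0
        rw [hw 1 le_rfl hks]
        simp [QInvProd_self, mulVec_add]
      · have hks' : k ≤ s := by omega
        rw [hw (k + 1) (by omega) (by omega)]
        simp only [Nat.add_sub_cancel]
        rw [ih hk1 hks', Finset.sum_Icc_succ_top (by omega : 1 ≤ k + 1)]
        rw [mulVec_add, mulVec_add, QInvProd_succ Q 1 k (by omega),
          ← mulVec_mulVec, QInvProd_self]
        have hsum : (Q (k+1))⁻¹ *ᵥ ∑ j ∈ Finset.Icc 1 k, QInvProd Q j k *ᵥ ρ j
            = ∑ j ∈ Finset.Icc 1 k, QInvProd Q j (k+1) *ᵥ ρ j := by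
          rw [← Matrix.mulVecLin_apply, map_sum]
          refine Finset.sum_congr rfl fun j hj => ?_
          have hj' : j ≤ k + 1 := by
            have := (Finset.mem_Icc.mp hj).2; omega
          rw [Matrix.mulVecLin_apply, QInvProd_succ Q j k hj', ← mulVec_mulVec]
        rw [hsum]
        abel
  have hfinal := key s hs le_rfl
  rw [henew, hfinal, hw0, hwstar]
  simp only [mulVec_add, add_mulVec, one_mulVec, ← mulVec_mulVec, Matrix.mul_assoc]
  abel
end

section
/- Let (V, ‖·‖) be a normed vector space, R : V → V a continuous linear map, and suppose ‖R^n‖ ≤ K for all n ≥ 1 with some K ≥ 1. Let Δt > 0, T > 0, c_1, c_2, c_3 ≥ 0, and let (e_n)_{n≥0}, (d_n)_{n≥1}, (ξ_n)_{n≥1}, (η_n)_{n≥1} be sequences in V such that e_0 = 0, e_n = R·e_{n−1} + d_n for all n ≥ 1, d_n = (R − I)ξ_n + η_n for all n ≥ 1, ‖ξ_n‖ ≤ c_1·Δt² for all n ≥ 1, ‖η_n‖ ≤ c_2·Δt³ for all n ≥ 1, and ‖ξ_n − ξ_{n−1}‖ ≤ c_3·Δt³ for all n ≥ 2. Then for every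 n ≥ 1 with n·Δt ≤ T one has ‖e_n‖ ≤ ((K + 1)c_1 + K·T·(c_2 + c_3))·Δt². -/
/-- Second-order convergence criterion: if `e_n = R e_{n−1} + d_n`, `e_0 = 0`,
`‖Rⁿ‖ ≤ K`, and the local errors decompose as `d_n = (R − I)ξ_n + η_n` with
`‖ξ_n‖ ≤ c₁Δt²`, `‖η_n‖ ≤ c₂Δt³`, `‖ξ_n − ξ_{n−1}‖ ≤ c₃Δt³`, then
`‖e_n‖ ≤ ((K+1)c₁ + K T (c₂+c₃)) Δt²` whenever `nΔt ≤ T`. -/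
theorem second_order_convergence_criterion
    {V : Type*} [NormedAddCommGroup V] [NormedSpace ℝ V]
    (R : V →L[ℝ] V) (K : ℝ) (hK : 1 ≤ K)
    (hR : ∀ n : ℕ, 1 ≤ n → ‖R ^ n‖ ≤ K)
    (dt T c1 c2 c3 : ℝ) (hdt : 0 < dt) (hT : 0 < T)
    (hc1 : 0 ≤ c1) (hc2 : 0 ≤ c2) (hc3 : 0 ≤ c3)
    (e d ξ η : ℕ → V)
    (he0 : e 0 = 0)
    (he : ∀ n, 1 ≤ n → e n = R (e (n - 1)) + d n)
    (hd : ∀ n, 1 ≤ n → d n = (R - 1) (ξ n) + η n)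
    (hξ : ∀ n, 1 ≤ n → ‖ξ n‖ ≤ c1 * dt ^ 2)
    (hη : ∀ n, 1 ≤ n → ‖η n‖ ≤ c2 * dt ^ 3)
    (hξd : ∀ n, 2 ≤ n → ‖ξ n - ξ (n - 1)‖ ≤ c3 * dt ^ 3) :
    ∀ n : ℕ, 1 ≤ n → (n : ℝ) * dt ≤ T →
      ‖e n‖ ≤ ((K + 1) * c1 + K * T * (c2 + c3)) * dt ^ 2 := by
  -- norms of all powers are bounded by K
  have hRK : ∀ k : ℕ, ‖R ^ k‖ ≤ K := by
    intro k
    cases k with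
    | zero =>
        calc ‖R ^ 0‖ = ‖(ContinuousLinearMap.id ℝ V)‖ := by rfl
        _ ≤ 1 := ContinuousLinearMap.norm_id_le
        _ ≤ K := hK
    | succ m => exact hR (m + 1) (Nat.succ_le_succ (Nat.zero_le m))
  -- key formula via summation by parts
  have key : ∀ n : ℕ, 1 ≤ n →
      e n + ξ n = (R ^ n) (ξ 1)
        + ∑ j ∈ Finset.Icc 2 n, (R ^ (n + 1 - j)) (ξ j - ξ (j - 1))
        + ∑ j ∈ Finset.Icc 1 n, (R ^ (n - j)) (η j) := by
    intro n hn
    induction n with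
    | zero => omega
    | succ m ih =>
      rcases Nat.eq_or_lt_of_le hn with h1 | h1
      · -- base case n = 1
        have hm : m = 0 := by omega
        subst hm
        have h1' := he 1 le_rfl
        have h2' := hd 1 le_rfl
        simp only [h1', h2', he0, map_zero, zero_add]
        rw [show Finset.Icc 2 1 = (∅ : Finset ℕ) by decide,
            show Finset.Icc 1 1 = ({1} : Finset ℕ) by decide]
        simp [ContinuousLinearMap.sub_apply, ContinuousLinearMap.one_apply, pow_one]
        abel
      · -- step m ≥ 1
        have hm : 1 ≤ m := by omega
        have ihm := ih hm
        have hrec : e (m + 1) + ξ (m + 1)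
            = R (e m + ξ m) + R (ξ (m + 1) - ξ m) + η (m + 1) := by
          have h1' := he (m + 1) (by omega)
          have h2' := hd (m + 1) (by omega)
          simp only [Nat.add_sub_cancel] at h1'
          rw [h1', h2']
          simp only [ContinuousLinearMap.sub_apply, ContinuousLinearMap.one_apply, map_add,
            map_sub]
          abel
        rw [hrec, ihm]
        rw [map_add, map_add, map_sum, map_sum]
        have e1 : R ((R ^ m) (ξ 1)) = (R ^ (m + 1)) (ξ 1) := by
          rw [pow_succ']; rfl
        have e2 : ∀ j ∈ Finset.Icc 2 m,
            R ((R ^ (m + 1 - j)) (ξ j - ξ (j - 1)))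
              = (R ^ (m + 1 + 1 - j)) (ξ j - ξ (j - 1)) := by
          intro j hj
          simp only [Finset.mem_Icc] at hj
          have : m + 1 + 1 - j = (m + 1 - j) + 1 := by omega
          rw [this, pow_succ']; rfl
        have e3 : ∀ j ∈ Finset.Icc 1 m,
            R ((R ^ (m - j)) (η j)) = (R ^ (m + 1 - j)) (η j) := by
          intro j hj
          simp only [Finset.mem_Icc] at hj
          have : m + 1 - j = (m - j) + 1 := by omega
          rw [this, pow_succ']; rfl
        rw [Finset.sum_congr rfl e2, Finset.sum_congr rfl e3, e1]
        have i2 : Finset.Icc 2 (m + 1) = insert (m + 1) (Finset.Icc 2 m) := by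
          ext j; simp only [Finset.mem_Icc, Finset.mem_insert]; omega
        have i3 : Finset.Icc 1 (m + 1) = insert (m + 1) (Finset.Icc 1 m) := by
          ext j; simp only [Finset.mem_Icc, Finset.mem_insert]; omega
        rw [i2, i3, Finset.sum_insert (by simp), Finset.sum_insert (by simp)]
        simp only [Nat.succ_sub_succ, Nat.add_sub_cancel, Nat.add_sub_cancel_left,
          Nat.sub_self, Nat.sub_zero, pow_zero, pow_one, ContinuousLinearMap.one_apply]
        abel
  intro n hn hnT
  have hkey := key n hn
  -- bound the three pieces
  have b1 : ‖(R ^ n) (ξ 1)‖ ≤ K * (c1 * dt ^ 2) := by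
    calc ‖(R ^ n) (ξ 1)‖ ≤ ‖R ^ n‖ * ‖ξ 1‖ := (R ^ n).le_opNorm _
    _ ≤ K * (c1 * dt ^ 2) := by
        apply mul_le_mul (hRK n) (hξ 1 le_rfl) (norm_nonneg _)
        linarith
  have b2 : ‖∑ j ∈ Finset.Icc 2 n, (R ^ (n + 1 - j)) (ξ j - ξ (j - 1))‖
      ≤ (n - 1 : ℝ) * (K * (c3 * dt ^ 3)) := by
    calc ‖∑ j ∈ Finset.Icc 2 n, (R ^ (n + 1 - j)) (ξ j - ξ (j - 1))‖
        ≤ ∑ j ∈ Finset.Icc 2 n, ‖(R ^ (n + 1 - j)) (ξ j - ξ (j - 1))‖ :=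
          norm_sum_le _ _
      _ ≤ ∑ j ∈ Finset.Icc 2 n, K * (c3 * dt ^ 3) := by
          apply Finset.sum_le_sum
          intro j hj
          simp only [Finset.mem_Icc] at hj
          calc ‖(R ^ (n + 1 - j)) (ξ j - ξ (j - 1))‖
              ≤ ‖R ^ (n + 1 - j)‖ * ‖ξ j - ξ (j - 1)‖ := (R ^ _).le_opNorm _
            _ ≤ K * (c3 * dt ^ 3) := by
                apply mul_le_mul (hRK _) (hξd j hj.1) (norm_nonneg _)
                linarith
      _ = (n - 1 : ℝ) * (K * (c3 * dt ^ 3)) := by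
          rw [Finset.sum_const, Nat.card_Icc, nsmul_eq_mul]
          have h : (n + 1 - 2 : ℕ) = n - 1 := by omega
          rw [h, Nat.cast_sub hn, Nat.cast_one]
  have b3 : ‖∑ j ∈ Finset.Icc 1 n, (R ^ (n - j)) (η j)‖
      ≤ (n : ℝ) * (K * (c2 * dt ^ 3)) := by
    calc ‖∑ j ∈ Finset.Icc 1 n, (R ^ (n - j)) (η j)‖
        ≤ ∑ j ∈ Finset.Icc 1 n, ‖(R ^ (n - j)) (η j)‖ := norm_sum_le _ _
      _ ≤ ∑ j ∈ Finset.Icc 1 n, K * (c2 * dt ^ 3) := by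
          apply Finset.sum_le_sum
          intro j hj
          simp only [Finset.mem_Icc] at hj
          calc ‖(R ^ (n - j)) (η j)‖
              ≤ ‖R ^ (n - j)‖ * ‖η j‖ := (R ^ _).le_opNorm _
            _ ≤ K * (c2 * dt ^ 3) := by
                apply mul_le_mul (hRK _) (hη j hj.1) (norm_nonneg _)
                linarith
      _ = (n : ℝ) * (K * (c2 * dt ^ 3)) := by
          rw [Finset.sum_const, Nat.card_Icc, nsmul_eq_mul, Nat.add_sub_cancel]
  have hen : ‖e n‖ ≤ ‖e n + ξ n‖ + ‖ξ n‖ := by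
    simpa using norm_sub_le (e n + ξ n) (ξ n)
  have hsum : ‖e n + ξ n‖ ≤ K * (c1 * dt ^ 2) + (n - 1 : ℝ) * (K * (c3 * dt ^ 3))
      + (n : ℝ) * (K * (c2 * dt ^ 3)) := by
    rw [hkey]
    calc ‖_ + _ + _‖ ≤ ‖(R ^ n) (ξ 1)
          + ∑ j ∈ Finset.Icc 2 n, (R ^ (n + 1 - j)) (ξ j - ξ (j - 1))‖
          + ‖∑ j ∈ Finset.Icc 1 n, (R ^ (n - j)) (η j)‖ := norm_add_le _ _
      _ ≤ ‖(R ^ n) (ξ 1)‖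
          + ‖∑ j ∈ Finset.Icc 2 n, (R ^ (n + 1 - j)) (ξ j - ξ (j - 1))‖
          + ‖∑ j ∈ Finset.Icc 1 n, (R ^ (n - j)) (η j)‖ := by
            gcongr; exact norm_add_le _ _
      _ ≤ _ := by gcongr
  have hξn := hξ n hn
  have hKpos : (0 : ℝ) < K := by linarith
  have hn1 : (1 : ℝ) ≤ (n : ℝ) := by exact_mod_cast hn
  have hdt3 : (n : ℝ) * dt ^ 3 ≤ T * dt ^ 2 := by
    have : (n : ℝ) * dt ^ 3 = ((n : ℝ) * dt) * dt ^ 2 := by ring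
    rw [this]
    apply mul_le_mul_of_nonneg_right hnT (by positivity)
  have hdt3' : ((n : ℝ) - 1) * dt ^ 3 ≤ T * dt ^ 2 := by
    refine le_trans ?_ hdt3
    apply mul_le_mul_of_nonneg_right (by linarith) (by positivity)
  nlinarith [mul_le_mul_of_nonneg_left hdt3 (mul_nonneg hKpos.le hc2),
    mul_le_mul_of_nonneg_left hdt3' (mul_nonneg hKpos.le hc3)]
end

section
/- Let k ≥ 2, let Δt > 0 and μ > 0 be real numbers, and let D ∈ ℝ^{k×k} be the tridiagonal matrix with −2 on the diagonal and 1 on the sub- and superdiagonals. Let e = (1,1,…,1)ᵀ ∈ ℝ^k, set Q_1 = I ⊗ (I − μD), Q_2 = (I − μD) ⊗ I, Z = 2μ·(I ⊗ D + D ⊗ I), w = (I − Q_1·Q_2)·(e ⊗ e), and B = −Δt·Q_1·Q_2 + Z, and assume B is invertible. Then the vector ξ = (1/2)·Δt²·(1 + Δt)·B^{-1}·w satisfies ‖ξ‖_∞ ≥ (1/2)·Δt²·(μ² + 2μ)/(Δt·(1 + 4μ)² + 16μ), where ‖·‖_∞ denotes the maximum norm. -/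
open Matrix Kronecker

lemma my_sum_ite_le {α : Type*} [Fintype α] [DecidableEq α] (c : ℝ) (hc : 0 ≤ c)
    (P : α → Prop) [DecidablePred P] (h : ∀ a b, P a → P b → a = b) :
    (∑ a, if P a then c else 0) ≤ c := by
  by_cases hex : ∃ a, P a
  · obtain ⟨a₀, ha₀⟩ := hex
    have key : ∀ a ∈ Finset.univ, (if P a then c else 0) = if a = a₀ then c else 0 := by
      intro a _
      by_cases hp : P a
      · rw [if_pos hp, if_pos (h a a₀ hp ha₀)]
      · rw [if_neg hp, if_neg]
        intro hh; exact hp (hh ▸ ha₀)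
    rw [Finset.sum_congr rfl key, Finset.sum_ite_eq' Finset.univ a₀ (fun _ => c),
      if_pos (Finset.mem_univ _)]
  · push_neg at hex
    have : ∀ a ∈ Finset.univ, (if P a then c else (0:ℝ)) = 0 := fun a _ => if_neg (hex a)
    rw [Finset.sum_congr rfl this, Finset.sum_const_zero]; exact hc

lemma my_abs_mulVec_le {n : Type*} [Fintype n] (A : Matrix n n ℝ) (x : n → ℝ) (i : n) :
    |(A *ᵥ x) i| ≤ (∑ j, |A i j|) * ‖x‖ := by
  rw [Matrix.mulVec, dotProduct]
  calc |∑ j, A i j * x j| ≤ ∑ j, |A i j * x j| := Finset.abs_sum_le_sum_abs _ _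
    _ ≤ ∑ j, |A i j| * ‖x‖ := by
        refine Finset.sum_le_sum fun j _ => ?_
        rw [abs_mul]
        exact mul_le_mul_of_nonneg_left ((Real.norm_eq_abs (x j)) ▸ norm_le_pi_norm x j) (abs_nonneg _)
    _ = (∑ j, |A i j|) * ‖x‖ := (Finset.sum_mul _ _ _).symm

lemma rowD_abs {k : ℕ} (D : Matrix (Fin k) (Fin k) ℝ)
    (hD : ∀ i j : Fin k, D i j =
      if (i : ℕ) = (j : ℕ) then -2
      else if (i : ℕ) + 1 = (j : ℕ) ∨ (j : ℕ) + 1 = (i : ℕ) then 1 else 0)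
    (i : Fin k) : ∑ j, |D i j| ≤ 4 := by
  have pt : ∀ j : Fin k, |D i j| ≤ (if (j:ℕ) = (i:ℕ) then (2:ℝ) else 0) +
      ((if (i:ℕ)+1 = (j:ℕ) then (1:ℝ) else 0) + (if (j:ℕ)+1 = (i:ℕ) then (1:ℝ) else 0)) := by
    intro j
    rw [hD]
    split_ifs <;> simp_all <;> norm_num
  calc ∑ j, |D i j| ≤ ∑ j : Fin k, ((if (j:ℕ) = (i:ℕ) then (2:ℝ) else 0) +
      ((if (i:ℕ)+1 = (j:ℕ) then (1:ℝ) else 0) + (if (j:ℕ)+1 = (i:ℕ) then (1:ℝ) else 0))) :=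
        Finset.sum_le_sum fun j _ => pt j
    _ = (∑ j : Fin k, if (j:ℕ) = (i:ℕ) then (2:ℝ) else 0) +
        ((∑ j : Fin k, if (i:ℕ)+1 = (j:ℕ) then (1:ℝ) else 0) +
         (∑ j : Fin k, if (j:ℕ)+1 = (i:ℕ) then (1:ℝ) else 0)) := by
        rw [Finset.sum_add_distrib, Finset.sum_add_distrib]
    _ ≤ 2 + (1 + 1) := by
        refine add_le_add (my_sum_ite_le 2 (by norm_num) _ ?_)
          (add_le_add (my_sum_ite_le 1 (by norm_num) _ ?_) (my_sum_ite_le 1 (by norm_num) _ ?_)) <;>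
        · intro a b ha hb; exact Fin.ext (by omega)
    _ = 4 := by norm_num

lemma rowD0 {k : ℕ} (hk : 2 ≤ k) (D : Matrix (Fin k) (Fin k) ℝ)
    (hD : ∀ i j : Fin k, D i j =
      if (i : ℕ) = (j : ℕ) then -2
      else if (i : ℕ) + 1 = (j : ℕ) ∨ (j : ℕ) + 1 = (i : ℕ) then 1 else 0) :
    ∑ j, D ⟨0, by omega⟩ j = -1 := by
  have pt : ∀ j : Fin k, D ⟨0, by omega⟩ j =
      (if j = (⟨0, by omega⟩ : Fin k) then (-2:ℝ) else 0) +
      (if j = (⟨1, by omega⟩ : Fin k) then (1:ℝ) else 0) := by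
    intro j
    rw [hD]
    simp only [Fin.ext_iff]
    split_ifs <;> simp_all <;> omega
  rw [Finset.sum_congr rfl (fun j _ => pt j), Finset.sum_add_distrib,
    Finset.sum_ite_eq' Finset.univ _ (fun _ => (-2:ℝ)),
    Finset.sum_ite_eq' Finset.univ _ (fun _ => (1:ℝ))]
  norm_num

lemma prod_sum_factor {k : ℕ} (f g : Fin k → ℝ) :
    ∑ q : Fin k × Fin k, f q.1 * g q.2 = (∑ a, f a) * (∑ b, g b) := by
  rw [Finset.sum_mul_sum, Fintype.sum_prod_type]

/-- Lower bound showing first-order convergence in the maximum norm: with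
`Q_1 = I ⊗ (I − μD)`, `Q_2 = (I − μD) ⊗ I`, `Z = 2μ(I ⊗ D + D ⊗ I)`,
`w = (I − Q_1 Q_2)(e ⊗ e)` and `B = −Δt Q_1 Q_2 + Z` invertible, the vector
`ξ = (1/2)Δt²(1 + Δt)B⁻¹w` satisfies
`‖ξ‖_∞ ≥ (1/2)Δt²(μ² + 2μ)/(Δt(1 + 4μ)² + 16μ)`. -/
theorem xi_lower_bound (k : ℕ) (hk : 2 ≤ k) (dt μ : ℝ) (hdt : 0 < dt) (hμ : 0 < μ)
    (D : Matrix (Fin k) (Fin k) ℝ)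
    (hD : ∀ i j : Fin k, D i j =
      if (i : ℕ) = (j : ℕ) then -2
      else if (i : ℕ) + 1 = (j : ℕ) ∨ (j : ℕ) + 1 = (i : ℕ) then 1 else 0)
    (e : Fin k → ℝ) (he : e = fun _ => 1)
    (Q1 Q2 Z B : Matrix (Fin k × Fin k) (Fin k × Fin k) ℝ)
    (hQ1 : Q1 = (1 : Matrix (Fin k) (Fin k) ℝ) ⊗ₖ (1 - μ • D))
    (hQ2 : Q2 = (1 - μ • D) ⊗ₖ (1 : Matrix (Fin k) (Fin k) ℝ))
    (hZ : Z = (2 * μ) • ((1 : Matrix (Fin k) (Fin k) ℝ) ⊗ₖ D +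
        D ⊗ₖ (1 : Matrix (Fin k) (Fin k) ℝ)))
    (w : Fin k × Fin k → ℝ)
    (hw : w = ((1 : Matrix (Fin k × Fin k) (Fin k × Fin k) ℝ) - Q1 * Q2) *ᵥ
        fun p => e p.1 * e p.2)
    (hB : B = -dt • (Q1 * Q2) + Z) (hBinv : IsUnit B.det)
    (ξ : Fin k × Fin k → ℝ)
    (hξ : ξ = ((1 / 2) * dt ^ 2 * (1 + dt)) • (B⁻¹ *ᵥ w)) :
    (1 / 2) * dt ^ 2 * (μ ^ 2 + 2 * μ) / (dt * (1 + 4 * μ) ^ 2 + 16 * μ) ≤ ‖ξ‖ := by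
  set i0 : Fin k := ⟨0, by omega⟩ with hi0
  set M : Matrix (Fin k) (Fin k) ℝ := 1 - μ • D with hM
  have hQ12 : Q1 * Q2 = M ⊗ₖ M := by
    rw [hQ1, hQ2, ← Matrix.mul_kronecker_mul, Matrix.one_mul, Matrix.mul_one]
  -- row sums
  have h1abs : ∑ a, |(1 : Matrix (Fin k) (Fin k) ℝ) i0 a| = 1 := by
    simp [Matrix.one_apply, apply_ite abs]
  have hDabs : ∑ a, |D i0 a| ≤ 4 := rowD_abs D hD i0
  have hDnn : (0:ℝ) ≤ ∑ a, |D i0 a| := Finset.sum_nonneg fun a _ => abs_nonneg _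
  have hMabs : ∑ a, |M i0 a| ≤ 1 + 4 * μ := by
    have pt : ∀ a : Fin k, |M i0 a| ≤ |(1 : Matrix (Fin k) (Fin k) ℝ) i0 a| + μ * |D i0 a| := by
      intro a
      rw [hM, Matrix.sub_apply, Matrix.smul_apply, smul_eq_mul]
      calc |(1 : Matrix (Fin k) (Fin k) ℝ) i0 a - μ * D i0 a|
          ≤ |(1 : Matrix (Fin k) (Fin k) ℝ) i0 a| + |μ * D i0 a| := abs_sub _ _
        _ = |(1 : Matrix (Fin k) (Fin k) ℝ) i0 a| + μ * |D i0 a| := by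
            rw [abs_mul, abs_of_pos hμ]
    calc ∑ a, |M i0 a| ≤ ∑ a, (|(1 : Matrix (Fin k) (Fin k) ℝ) i0 a| + μ * |D i0 a|) :=
          Finset.sum_le_sum fun a _ => pt a
      _ = 1 + μ * ∑ a, |D i0 a| := by
          rw [Finset.sum_add_distrib, h1abs, ← Finset.mul_sum]
      _ ≤ 1 + 4 * μ := by nlinarith
  have hMnn : (0:ℝ) ≤ ∑ a, |M i0 a| := Finset.sum_nonneg fun a _ => abs_nonneg _
  -- sum of row of M (not abs)
  have hMrow : ∑ a, M i0 a = 1 + μ := by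
    have h1 : ∑ a, (1 : Matrix (Fin k) (Fin k) ℝ) i0 a = 1 := by
      simp [Matrix.one_apply]
    have hd0 : ∑ a, D i0 a = -1 := rowD0 hk D hD
    rw [hM]
    simp only [Matrix.sub_apply, Matrix.smul_apply, smul_eq_mul]
    rw [Finset.sum_sub_distrib, h1, ← Finset.mul_sum, hd0]
    ring
  -- value of w at (i0, i0)
  have hw0 : w (i0, i0) = 1 - (1 + μ) * (1 + μ) := by
    rw [hw, hQ12, Matrix.sub_mulVec, Matrix.one_mulVec, he]
    simp only [Pi.sub_apply]
    have : ((M ⊗ₖ M) *ᵥ fun p : Fin k × Fin k => (1:ℝ) * 1) (i0, i0)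
        = ∑ q : Fin k × Fin k, M i0 q.1 * M i0 q.2 := by
      rw [Matrix.mulVec, dotProduct]
      simp [Matrix.kroneckerMap_apply]
    rw [this, prod_sum_factor, hMrow]
    norm_num
  -- B applied to v gives w
  set v : Fin k × Fin k → ℝ := B⁻¹ *ᵥ w with hv
  have hBv : B *ᵥ v = w := by
    rw [hv, Matrix.mulVec_mulVec, Matrix.mul_nonsing_inv _ hBinv, Matrix.one_mulVec]
  -- row sum bound for B
  have hBpt : ∀ q : Fin k × Fin k, |B (i0, i0) q| ≤
      dt * (|M i0 q.1| * |M i0 q.2|) +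
      ((2*μ) * (|(1 : Matrix (Fin k) (Fin k) ℝ) i0 q.1| * |D i0 q.2|) +
       (2*μ) * (|D i0 q.1| * |(1 : Matrix (Fin k) (Fin k) ℝ) i0 q.2|)) := by
    intro q
    rw [hB, hZ, hQ12]
    simp only [Matrix.add_apply, Matrix.smul_apply, Matrix.kroneckerMap_apply, smul_eq_mul,
      Matrix.neg_apply]
    have h2μ : (0:ℝ) < 2*μ := by linarith
    calc |(-dt) * (M i0 q.1 * M i0 q.2) +
          2*μ * ((1 : Matrix (Fin k) (Fin k) ℝ) i0 q.1 * D i0 q.2 +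
            D i0 q.1 * (1 : Matrix (Fin k) (Fin k) ℝ) i0 q.2)|
        ≤ |(-dt) * (M i0 q.1 * M i0 q.2)| +
          |2*μ * ((1 : Matrix (Fin k) (Fin k) ℝ) i0 q.1 * D i0 q.2 +
            D i0 q.1 * (1 : Matrix (Fin k) (Fin k) ℝ) i0 q.2)| := abs_add_le _ _
      _ ≤ dt * (|M i0 q.1| * |M i0 q.2|) +
          ((2*μ) * (|(1 : Matrix (Fin k) (Fin k) ℝ) i0 q.1| * |D i0 q.2|) +
           (2*μ) * (|D i0 q.1| * |(1 : Matrix (Fin k) (Fin k) ℝ) i0 q.2|)) := by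
          rw [abs_mul, abs_mul, abs_neg, abs_of_pos hdt, abs_mul, abs_of_pos h2μ]
          rw [← mul_add]
          refine add_le_add le_rfl (mul_le_mul_of_nonneg_left ?_ (le_of_lt h2μ))
          calc |(1 : Matrix (Fin k) (Fin k) ℝ) i0 q.1 * D i0 q.2 +
                D i0 q.1 * (1 : Matrix (Fin k) (Fin k) ℝ) i0 q.2|
              ≤ |(1 : Matrix (Fin k) (Fin k) ℝ) i0 q.1 * D i0 q.2| +
                |D i0 q.1 * (1 : Matrix (Fin k) (Fin k) ℝ) i0 q.2| := abs_add_le _ _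
            _ = |(1 : Matrix (Fin k) (Fin k) ℝ) i0 q.1| * |D i0 q.2| +
                |D i0 q.1| * |(1 : Matrix (Fin k) (Fin k) ℝ) i0 q.2| := by
                rw [abs_mul, abs_mul]
  have hrow : ∑ q, |B (i0, i0) q| ≤ dt * (1 + 4*μ)^2 + 16*μ := by
    calc ∑ q, |B (i0, i0) q|
        ≤ ∑ q : Fin k × Fin k, (dt * (|M i0 q.1| * |M i0 q.2|) +
          ((2*μ) * (|(1 : Matrix (Fin k) (Fin k) ℝ) i0 q.1| * |D i0 q.2|) +
           (2*μ) * (|D i0 q.1| * |(1 : Matrix (Fin k) (Fin k) ℝ) i0 q.2|))) :=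
          Finset.sum_le_sum fun q _ => hBpt q
      _ = dt * ((∑ a, |M i0 a|) * (∑ a, |M i0 a|)) +
          ((2*μ) * ((∑ a, |(1 : Matrix (Fin k) (Fin k) ℝ) i0 a|) * (∑ a, |D i0 a|)) +
           (2*μ) * ((∑ a, |D i0 a|) * (∑ a, |(1 : Matrix (Fin k) (Fin k) ℝ) i0 a|))) := by
          rw [Finset.sum_add_distrib, Finset.sum_add_distrib,
            ← Finset.mul_sum, ← Finset.mul_sum, ← Finset.mul_sum,
            prod_sum_factor (fun a => |M i0 a|) (fun a => |M i0 a|),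
            prod_sum_factor (fun a => |(1 : Matrix (Fin k) (Fin k) ℝ) i0 a|) (fun a => |D i0 a|),
            prod_sum_factor (fun a => |D i0 a|) (fun a => |(1 : Matrix (Fin k) (Fin k) ℝ) i0 a|)]
      _ ≤ dt * (1 + 4*μ)^2 + 16*μ := by
          rw [h1abs]
          have h1 : (∑ a, |M i0 a|) * (∑ a, |M i0 a|) ≤ (1 + 4*μ)^2 := by nlinarith
          nlinarith
  -- main chain
  have hkey : μ^2 + 2*μ ≤ (dt * (1 + 4*μ)^2 + 16*μ) * ‖v‖ := by
    have h1 := my_abs_mulVec_le B v (i0, i0)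
    rw [hBv] at h1
    have habs : |w (i0, i0)| = μ^2 + 2*μ := by
      rw [hw0, abs_of_nonpos (by nlinarith)]; ring
    rw [habs] at h1
    calc μ^2 + 2*μ ≤ (∑ q, |B (i0, i0) q|) * ‖v‖ := h1
      _ ≤ (dt * (1 + 4*μ)^2 + 16*μ) * ‖v‖ :=
          mul_le_mul_of_nonneg_right hrow (norm_nonneg v)
  have hξn : ‖ξ‖ = ((1/2) * dt^2 * (1 + dt)) * ‖v‖ := by
    rw [hξ, norm_smul, Real.norm_eq_abs, abs_of_pos (by nlinarith)]
  have hC : (0:ℝ) < dt * (1 + 4*μ)^2 + 16*μ := by positivity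
  rw [hξn, div_le_iff₀ hC]
  have hvnn : (0:ℝ) ≤ ‖v‖ := norm_nonneg v
  nlinarith [mul_le_mul_of_nonneg_left hkey (by positivity : (0:ℝ) ≤ (1/2) * dt^2),
    mul_nonneg (mul_nonneg (by positivity : (0:ℝ) ≤ (1/2)*dt^2) hdt.le)
      (mul_nonneg hC.le hvnn)]
end
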